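/- arXiv:1905.00850 — 4 statements merged into one kernel-verified Lean document; each statement's English description precedes it below -/
import Mathlib

section
/- With d = dep(p) ≥ 2, t = ⌈log₂ d⌉, and V' = {v ∈ V : dep(v) mod t = 0 and dep(v) + t ≤ d}, for every vertex v ∈ V there exists i ∈ {0, 1, ..., 2t} such that p^(i)(v) ∈ V'. -/
/-!
Walking up from `v` lowers the depth by one per step. Among the `2t + 1` depths
`dep v, dep v - 1, …, dep v - 2t` (truncated at `0`) there is a multiple of `t` lying at least
`t` below `d`: take the largest multiple of `t` that is at most `dep v`, or the one before it if
that one is too close to `d`. This works for every `t` with `1 ≤ t ≤ d`, which `⌈log₂ d⌉` is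
once `d ≥ 2`.
-/

open Function

/-- `u` is an ancestor of `v` in the rooted forest given by parent pointers `p`. -/
def IsAncestor {V : Type} (p : V → V) (u v : V) : Prop := ∃ i : ℕ, p^[i] v = u

/-- The depth of `v`: the least `i` with `p^[i+1] v = p^[i] v`. -/
noncomputable def dep {V : Type} (p : V → V) (v : V) : ℕ :=
  sInf {i : ℕ | p^[i + 1] v = p^[i] v}

/-- The depth of the rooted tree `p`. -/
noncomputable def treeDep {V : Type} [Fintype V] (p : V → V) : ℕ :=
  Finset.univ.sup (dep p)

theorem Nat.exists_le_two_mul_sub_mod_eq_zero_add_le {k d t : ℕ} (hkd : k ≤ d) (ht : 0 < t)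
    (htd : t ≤ d) : ∃ i ≤ 2 * t, (k - i) % t = 0 ∧ k - i + t ≤ d := by
  have hmod : k % t < t := Nat.mod_lt k ht
  by_cases h : k - k % t + t ≤ d
  · exact ⟨k % t, by omega, Nat.sub_mod_eq_zero_of_mod_eq (Nat.mod_mod k t).symm, h⟩
  · have hdiv : t ≤ k - k % t := Nat.le_of_dvd (by omega) (Nat.dvd_sub_mod k)
    refine ⟨k % t + t, by omega, Nat.sub_mod_eq_zero_of_mod_eq ?_, by omega⟩
    rw [Nat.add_mod_right, Nat.mod_mod]

section Depth

variable {V : Type} (p : V → V) {v : V}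

theorem iterate_succ_eq_of_dep_le (hv : ∃ i, p^[i + 1] v = p^[i] v) {j : ℕ} (hj : dep p v ≤ j) :
    p^[j + 1] v = p^[j] v := by
  have hfix : p (p^[dep p v] v) = p^[dep p v] v := by
    rw [← iterate_succ_apply' p]
    exact Nat.sInf_mem hv
  obtain ⟨m, rfl⟩ := Nat.exists_eq_add_of_le hj
  rw [iterate_succ_apply', add_comm, iterate_add_apply, iterate_fixed hfix]
  exact hfix

theorem iterate_succ_eq_iff_dep_le (hv : ∃ i, p^[i + 1] v = p^[i] v) {j : ℕ} :
    p^[j + 1] v = p^[j] v ↔ dep p v ≤ j :=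
  ⟨fun h => Nat.sInf_le h, iterate_succ_eq_of_dep_le p hv⟩

theorem dep_iterate (hv : ∃ i, p^[i + 1] v = p^[i] v) (i : ℕ) :
    dep p (p^[i] v) = dep p v - i := by
  have hset : {j | p^[j + 1] (p^[i] v) = p^[j] (p^[i] v)} = Set.Ici (dep p v - i) := by
    ext j
    rw [Set.mem_ofPred_eq, ← iterate_add_apply, ← iterate_add_apply, Nat.add_right_comm,
      iterate_succ_eq_iff_dep_le p hv, Set.mem_Ici]
    omega
  rw [dep, hset, csInf_Ici]

theorem dep_le_treeDep [Fintype V] (v : V) : dep p v ≤ treeDep p :=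
  Finset.le_sup (Finset.mem_univ v)

end Depth

theorem stmt3_general {V : Type} [Fintype V]
    (p : V → V)
    (hstab : ∀ v : V, ∃ i : ℕ, p^[i + 1] v = p^[i] v)
    (d t : ℕ) (hd : d = treeDep p) (hd2 : 2 ≤ d) (ht : t = Nat.clog 2 d)
    (V' : Set V) (hV' : V' = {v : V | dep p v % t = 0 ∧ dep p v + t ≤ d}) :
    ∀ v : V, ∃ i : ℕ, i ≤ 2 * t ∧ p^[i] v ∈ V' := by
  intro v
  have ht0 : 0 < t := ht ▸ Nat.clog_pos one_lt_two hd2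
  have htd : t ≤ d := ht ▸ Nat.clog_le_of_le_pow Nat.lt_two_pow_self.le
  obtain ⟨i, hi, hmod, hle⟩ :=
    Nat.exists_le_two_mul_sub_mod_eq_zero_add_le (hd ▸ dep_le_treeDep p v) ht0 htd
  refine ⟨i, hi, ?_⟩
  rw [hV', Set.mem_ofPred_eq, dep_iterate p (hstab v)]
  exact ⟨hmod, hle⟩

theorem stmt3 {V : Type} [Fintype V] [DecidableEq V]
    (p : V → V) (r : V)
    (hstab : ∀ v : V, ∃ i : ℕ, p^[i + 1] v = p^[i] v)
    (hr : p r = r) (hroot : ∀ v : V, p v = v → v = r)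
    (d t : ℕ) (hd : d = treeDep p) (hd2 : 2 ≤ d) (ht : t = Nat.clog 2 d)
    (V' : Set V) (hV' : V' = {v : V | dep p v % t = 0 ∧ dep p v + t ≤ d}) :
    ∀ v : V, ∃ i : ℕ, i ≤ 2 * t ∧ p^[i] v ∈ V' :=
  stmt3_general p hstab d t hd hd2 ht V' hV'
end

section
/- Let G be a simple graph and let e1, e2, e3 be edges of G with e1 ≠ e3. If some simple cycle of G contains both e1 and e2, and some simple cycle of G contains both e2 and e3, then some simple cycle of G contains both e1 and e3. -/
/-!
Let `C₁` be a cycle through `e1` and `e2 = ab`, and suppose `e3 ∉ C₁`. Walking around `C₂` from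
`a` to `b` the way that passes `e3` gives a path `R` through `e3` whose ends lie on `C₁`. Follow
`R` from both ends of `e3` until it first meets `C₁`, at `p` and at `q`: this is an ear through `e3`
meeting `C₁` only in `p ≠ q` (distinct since `R` is a path). The ear together with the arc of `C₁`
from `p` to `q` that contains `e1` is the required cycle.
-/

namespace SimpleGraph.Walk

variable {V : Type*} {G : SimpleGraph V}

theorem IsPath.append {u v w : V} {p : G.Walk u v} {q : G.Walk v w} (hp : p.IsPath)
    (hq : q.IsPath) (hpq : ∀ x ∈ p.support, x ∈ q.support → x = v) :
    (p.append q).IsPath := by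
  rw [isPath_def, support_append, List.nodup_append]
  refine ⟨hp.support_nodup, hq.support_nodup.tail, fun x hx y hy hxy => ?_⟩
  subst hxy
  have hvq : v ∉ q.support.tail := by
    have := hq.support_nodup
    rw [← cons_tail_support] at this
    exact (List.nodup_cons.mp this).1
  exact hvq (hpq x hx (List.mem_of_mem_tail hy) ▸ hy)

theorem exists_eq_append_cons_of_mem_edges {s t : V} {e : Sym2 V} (P : G.Walk s t)
    (he : e ∈ P.edges) :
    ∃ (u v : V) (h : G.Adj u v) (P₁ : G.Walk s u) (P₂ : G.Walk v t),
      s(u, v) = e ∧ P = P₁.append (cons h P₂) := by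
  induction P with
  | nil => simp at he
  | @cons s w t h P ih =>
    rw [edges_cons, List.mem_cons] at he
    by_cases hsw : e = s(s, w)
    · exact ⟨s, w, h, nil, P, hsw.symm, rfl⟩
    · obtain ⟨u, v, h', P₁, P₂, huv, rfl⟩ := ih (he.resolve_left hsw)
      exact ⟨u, v, h', cons h P₁, P₂, huv, rfl⟩

theorem IsPath.exists_isPath_to_first_mem {s t : V} {P : G.Walk s t} (hP : P.IsPath) {S : Set V}
    (ht : t ∈ S) :
    ∃ p ∈ S, ∃ Q : G.Walk s p, Q.IsPath ∧ Q.support ⊆ P.support ∧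
      ∀ y ∈ Q.support, y ∈ S → y = p := by
  classical
  obtain ⟨p, hpS, hpP, hfirst⟩ := P.exists_mem_support_forall_mem_support_imp_eq
    (P.support.toFinset.filter (· ∈ S)) ⟨t, by simp [ht]⟩
  have hsub := P.support_takeUntil_subset_support hpP
  refine ⟨p, (Finset.mem_filter.mp hpS).2, P.takeUntil p hpP, hP.takeUntil hpP, hsub,
    fun y hyQ hyS => hfirst y ?_ hyQ⟩
  simp [hsub hyQ, hyS]

theorem IsCycle.exists_isPath_mem_edges {x : V} {c : G.Walk x x} (hc : c.IsCycle) {p q : V}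
    (hp : p ∈ c.support) (hq : q ∈ c.support) (hpq : p ≠ q) {e : Sym2 V} (he : e ∈ c.edges) :
    ∃ A : G.Walk p q, A.IsPath ∧ e ∈ A.edges ∧ A.support ⊆ c.support ∧ A.edges ⊆ c.edges := by
  classical
  set c' := c.rotate p hp
  have hq' : q ∈ c'.support := (c.mem_support_rotate_iff p hp).2 hq
  have hsupp : c'.support ⊆ c.support := fun y => (c.mem_support_rotate_iff p hp).1
  have hedges : c'.edges ⊆ c.edges := fun f => (c.rotate_edges p hp).mem_iff.1
  have hc' : ((c'.takeUntil q hq').append (c'.dropUntil q hq')).IsCycle := by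
    rw [take_spec]; exact hc.rotate hp
  have he' : e ∈ (c'.takeUntil q hq').edges ++ (c'.dropUntil q hq').edges := by
    rw [← edges_append, take_spec]; exact (c.rotate_edges p hp).mem_iff.2 he
  rcases List.mem_append.mp he' with he | he
  · exact ⟨c'.takeUntil q hq', hc'.isPath_of_append_left (not_nil_of_ne hpq.symm), he,
      List.Subset.trans (c'.support_takeUntil_subset_support hq') hsupp,
      List.Subset.trans (c'.edges_takeUntil_subset_edges hq') hedges⟩
  · refine ⟨(c'.dropUntil q hq').reverse,
      (hc'.isPath_of_append_right (not_nil_of_ne hpq)).reverse, by simpa using he, ?_, ?_⟩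
    · rw [support_reverse, List.reverse_subset]
      exact List.Subset.trans (c'.support_dropUntil_subset_support hq') hsupp
    · rw [edges_reverse, List.reverse_subset]
      exact List.Subset.trans (c'.edges_dropUntil_subset_edges hq') hedges

theorem IsCycle.exists_isCycle_mem_edges_of_isPath {x : V} {c : G.Walk x x} (hc : c.IsCycle)
    {e e' : Sym2 V} (he : e ∈ c.edges) (he' : e' ∉ c.edges) {s t : V} {P : G.Walk s t}
    (hP : P.IsPath) (hs : s ∈ c.support) (ht : t ∈ c.support) (he'P : e' ∈ P.edges) :
    ∃ (y : V) (d : G.Walk y y), d.IsCycle ∧ e ∈ d.edges ∧ e' ∈ d.edges := by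
  obtain ⟨u, v, h, P₁, P₂, rfl, rfl⟩ := P.exists_eq_append_cons_of_mem_edges he'P
  have hP₁ : P₁.IsPath := hP.of_append_left
  have hP₂ : P₂.IsPath := hP.of_append_right.of_cons
  have hdisj : P₁.support.Disjoint P₂.support := by
    have := hP.support_nodup
    rw [support_append, support_cons, List.tail_cons] at this
    exact List.disjoint_of_nodup_append this
  obtain ⟨p, hpc, S₁, hS₁, hS₁P, hS₁first⟩ :=
    hP₁.reverse.exists_isPath_to_first_mem (S := {y | y ∈ c.support}) hs
  obtain ⟨q, hqc, S₂, hS₂, hS₂P, hS₂first⟩ :=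
    hP₂.exists_isPath_to_first_mem (S := {y | y ∈ c.support}) ht
  rw [support_reverse, List.subset_reverse] at hS₁P
  have hpq : p ≠ q := by
    rintro rfl
    exact hdisj (hS₁P S₁.end_mem_support) (hS₂P S₂.end_mem_support)
  obtain ⟨A, hA, heA, hAc, hAe⟩ := hc.exists_isPath_mem_edges hpc hqc hpq he
  have hAS₂ : (A.append S₂.reverse).IsPath :=
    hA.append hS₂.reverse fun y hyA hyS₂ => hS₂first y (by simpa using hyS₂) (hAc hyA)
  have hW : (S₁.append (A.append S₂.reverse)).IsPath := by
    refine hS₁.append hAS₂ fun y hyS₁ hy => ?_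
    rcases (mem_support_append_iff _ _).mp hy with hyA | hyS₂
    · exact hS₁first y hyS₁ (hAc hyA)
    · exact absurd (hS₂P (by simpa using hyS₂)) (hdisj (hS₁P hyS₁))
  refine ⟨v, cons h.symm (S₁.append (A.append S₂.reverse)), (cons_isCycle_iff _ _).2 ⟨hW, ?_⟩,
    by simp [heA], by simp⟩
  rw [edges_append, edges_append, edges_reverse, List.mem_append, List.mem_append,
    List.mem_reverse]
  rintro (hvu | hvu | hvu)
  · exact hdisj (hS₁P (S₁.fst_mem_support_of_mem_edges hvu)) P₂.start_mem_support
  · exact he' (Sym2.eq_swap ▸ hAe hvu)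
  · exact hdisj P₁.end_mem_support (hS₂P (S₂.snd_mem_support_of_mem_edges hvu))

end SimpleGraph.Walk

open SimpleGraph Walk in
theorem stmt5_general {V : Type} (G : SimpleGraph V) (e1 e2 e3 : Sym2 V)
    (h12 : ∃ (x : V) (c : G.Walk x x), c.IsCycle ∧ e1 ∈ c.edges ∧ e2 ∈ c.edges)
    (h23 : ∃ (x : V) (c : G.Walk x x), c.IsCycle ∧ e2 ∈ c.edges ∧ e3 ∈ c.edges) :
    ∃ (x : V) (c : G.Walk x x), c.IsCycle ∧ e1 ∈ c.edges ∧ e3 ∈ c.edges := by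
  obtain ⟨x₁, c₁, hc₁, he₁, he₂⟩ := h12
  obtain ⟨x₂, c₂, hc₂, he₂', he₃⟩ := h23
  by_cases he₃c₁ : e3 ∈ c₁.edges
  · exact ⟨x₁, c₁, hc₁, he₁, he₃c₁⟩
  obtain ⟨a, b⟩ := e2
  obtain ⟨R, hR, he₃R, -, -⟩ := hc₂.exists_isPath_mem_edges (c₂.fst_mem_support_of_mem_edges he₂')
    (c₂.snd_mem_support_of_mem_edges he₂') (c₂.adj_of_mem_edges he₂').ne he₃
  exact hc₁.exists_isCycle_mem_edges_of_isPath he₁ he₃c₁ hR (c₁.fst_mem_support_of_mem_edges he₂)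
    (c₁.snd_mem_support_of_mem_edges he₂) he₃R

theorem stmt5 {V : Type} (G : SimpleGraph V) (e1 e2 e3 : Sym2 V) (hne : e1 ≠ e3)
    (h12 : ∃ (x : V) (c : G.Walk x x), c.IsCycle ∧ e1 ∈ c.edges ∧ e2 ∈ c.edges)
    (h23 : ∃ (x : V) (c : G.Walk x x), c.IsCycle ∧ e2 ∈ c.edges ∧ e3 ∈ c.edges) :
    ∃ (x : V) (c : G.Walk x x), c.IsCycle ∧ e1 ∈ c.edges ∧ e3 ∈ c.edges :=
  stmt5_general G e1 e2 e3 h12 h23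
end

section
/- For all u, w ∈ V' = V \ {r}, the vertices u and w lie in the same connected component of the auxiliary graph G' if and only if u = w or there is a simple cycle in G containing both edges {u, p(u)} and {w, p(w)}. -/
/-!
Write `e ≈ f` when the edges `e` and `f` lie on a common cycle of `G`. This relation is
transitive: if cycles `C₁ ∋ e` and `C₂ ∋ g` share an edge, then `C₁` minus `e` is a path meeting
`C₂` in two vertices, and rerouting it along the arc of `C₂` through `g` closes up to a cycle
through `e` and `g`. For every edge `{a, b}` of `G'` the tree edges `{a, p a}` and `{b, p b}` lie
on the fundamental cycle of a single non-tree edge, so reachability in `G'` implies `≈`.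

Conversely, fix a vertex `z` and send every vertex strictly below `z` to the child of `z` above
it, and every other vertex to `z`. The endpoints of a `G`-edge avoiding `z` are sent to vertices
that are reachable in `G'`: the edge stays inside one branch, or it is a cross edge between two
branches, or it leaves the subtree of `z`, and then the type (i) edges of `G'` climb from its
endpoints. Applying this to walks around a cycle through `{u, p u}` and `{w, p w}` that avoid
the pivot `z`, for `z` running over the ancestors of `u` and `w` up to their lowest common
ancestor, connects `u` and `w` in `G'`.
-/

open Function

/-- The auxiliary graph `G'` on `V' = V \ {r}` (with `r` isolated): edges are
(i) `{v, p v}` for `v ≠ r` such that some edge `{x, y}` of `G` has `x` in the subtree of `v`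
and `y` outside the subtree of `p v`; (ii) non-tree edges `{u, v}` of `G` such that neither
endpoint is an ancestor of the other. -/
def auxGraph {V : Type} (G : SimpleGraph V) (p : V → V) (r : V) : SimpleGraph V :=
  SimpleGraph.fromRel (fun a b =>
    (a ≠ r ∧ b = p a ∧ ∃ x y, G.Adj x y ∧ IsAncestor p a x ∧ ¬ IsAncestor p (p a) y)
    ∨ (G.Adj a b ∧ p a ≠ b ∧ p b ≠ a ∧ ¬ IsAncestor p a b ∧ ¬ IsAncestor p b a))

namespace SimpleGraph

variable {V : Type*} {G : SimpleGraph V}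

def OnCommonCycle (G : SimpleGraph V) (e f : Sym2 V) : Prop :=
  ∃ (x : V) (c : G.Walk x x), c.IsCycle ∧ e ∈ c.edges ∧ f ∈ c.edges

namespace Walk

lemma IsPath.append_of_forall_mem_support {u v w : V} {p : G.Walk u v} {q : G.Walk v w}
    (hp : p.IsPath) (hq : q.IsPath) (h : ∀ z ∈ p.support, z ∈ q.support → z = v) :
    (p.append q).IsPath := by
  rw [isPath_def, support_append, List.nodup_append]
  refine ⟨hp.support_nodup, hq.support_nodup.tail, fun z hz z' hz' hzz' => ?_⟩
  subst hzz'
  have hv : v ∉ q.support.tail := by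
    have := hq.support_nodup
    rw [← q.cons_tail_support] at this
    exact (List.nodup_cons.mp this).1
  exact hv (h z hz (List.mem_of_mem_tail hz') ▸ hz')

lemma exists_append_first_mem {a b : V} (W : G.Walk a b) (S : Set V)
    (h : ∃ z ∈ W.support, z ∈ S) :
    ∃ (y : V) (W₁ : G.Walk a y) (W₂ : G.Walk y b),
      W = W₁.append W₂ ∧ y ∈ S ∧ ∀ z ∈ W₁.support, z ∈ S → z = y := by
  classical
  induction W with
  | nil =>
    obtain ⟨z, hz, hzS⟩ := h
    rw [support_nil, List.mem_singleton] at hz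
    subst hz
    exact ⟨z, nil, nil, rfl, hzS, by simp⟩
  | @cons u v w huv W ih =>
    by_cases huS : u ∈ S
    · exact ⟨u, nil, cons huv W, rfl, huS, by simp⟩
    obtain ⟨y, W₁, W₂, rfl, hyS, hfirst⟩ : ∃ (y : V) (W₁ : G.Walk v y) (W₂ : G.Walk y w),
        W = W₁.append W₂ ∧ y ∈ S ∧ ∀ z ∈ W₁.support, z ∈ S → z = y := by
      obtain ⟨z, hz, hzS⟩ := h
      rw [support_cons, List.mem_cons] at hz
      rcases hz with rfl | hz
      · exact absurd hzS huS
      · exact ih ⟨z, hz, hzS⟩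
    refine ⟨y, cons huv W₁, W₂, rfl, hyS, fun z hz hzS => ?_⟩
    rw [support_cons, List.mem_cons] at hz
    rcases hz with rfl | hz
    · exact absurd hzS huS
    · exact hfirst z hz hzS

lemma IsCycle.exists_isPath_of_mem_edges {a b : V} {C : G.Walk a a} (hC : C.IsCycle)
    (hab : s(a, b) ∈ C.edges) :
    ∃ Q : G.Walk b a, Q.IsPath ∧ s(a, b) ∉ Q.edges ∧ C.support ⊆ Q.support := by
  have of_snd_eq : ∀ {D : G.Walk a a}, D.IsCycle → C.support ⊆ D.support → D.snd = b →
      ∃ Q : G.Walk b a, Q.IsPath ∧ s(a, b) ∉ Q.edges ∧ C.support ⊆ Q.support := by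
    rintro D hD hCD rfl
    have hD' := hD.edges_nodup
    rw [← D.cons_tail_eq hD.not_nil, edges_cons, List.nodup_cons] at hD'
    refine ⟨D.tail, hD.isPath_tail, hD'.1, fun z hz => ?_⟩
    rw [support_tail_of_not_nil _ hD.not_nil]
    rcases List.mem_cons.mp (D.cons_support_tail hD.not_nil ▸ hCD hz) with rfl | hz'
    · exact D.end_mem_tail_support hD.not_nil
    · rwa [support_tail_of_not_nil _ hD.not_nil] at hz'
  -- `b` follows `a` on `C` or on `C.reverse`
  cases C with
  | nil => simp at hab
  | @cons _ c _ hac T =>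
    obtain ⟨hT, -⟩ := (cons_isCycle_iff T hac).mp hC
    rw [edges_cons, List.mem_cons, Sym2.eq_iff] at hab
    rcases hab with (⟨-, rfl⟩ | ⟨rfl, -⟩) | hab
    · exact of_snd_eq hC (fun z hz => hz) (snd_cons _ _)
    · exact absurd rfl hac.ne
    · refine of_snd_eq hC.reverse (fun z hz => by simp at hz ⊢; tauto) ?_
      rw [snd_reverse, penultimate_cons_of_not_nil _ _ (not_nil_of_ne hac.ne.symm)]
      exact (hT.eq_penultimate_of_mem_edges hab).symm

lemma IsCycle.exists_isPath_mem_edges_s7 {s x y : V} {C : G.Walk s s} (hC : C.IsCycle)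
    (hx : x ∈ C.support) (hy : y ∈ C.support) (hxy : x ≠ y) {g : Sym2 V} (hg : g ∈ C.edges) :
    ∃ A : G.Walk y x, A.IsPath ∧ g ∈ A.edges ∧ A.support ⊆ C.support ∧ A.edges ⊆ C.edges := by
  classical
  set D := C.rotate x hx
  have hD : D.IsCycle := hC.rotate hx
  have hyD : y ∈ D.support := (C.mem_support_rotate_iff x hx).mpr hy
  have hDC : D.support ⊆ C.support := fun z hz => (C.mem_support_rotate_iff x hx).mp hz
  have hDCe : D.edges ⊆ C.edges := fun e he => (C.rotate_edges x hx).mem_iff.mp he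
  have hsplit := D.take_spec hyD
  have h₁ : (D.takeUntil y hyD).IsPath := hD.isPath_takeUntil hyD
  have h₂ : (D.dropUntil y hyD).IsPath :=
    (hsplit ▸ hD).isPath_of_append_right (not_nil_of_ne hxy)
  have hgD : g ∈ D.edges := (C.rotate_edges x hx).mem_iff.mpr hg
  rw [← hsplit, edges_append, List.mem_append] at hgD
  rcases hgD with hg₁ | hg₂
  · refine ⟨(D.takeUntil y hyD).reverse, h₁.reverse, by simpa using hg₁, fun z hz => ?_,
      fun e he => ?_⟩
    · rw [support_reverse, List.mem_reverse] at hz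
      exact hDC (D.support_takeUntil_subset_support hyD hz)
    · rw [edges_reverse, List.mem_reverse] at he
      exact hDCe (D.edges_takeUntil_subset_edges hyD he)
  · exact ⟨D.dropUntil y hyD, h₂, hg₂,
      List.Subset.trans (D.support_dropUntil_subset_support hyD) hDC,
      List.Subset.trans (D.edges_dropUntil_subset_edges hyD) hDCe⟩

lemma IsPath.exists_isPath_mem_edges_of_isCycle {a b s v v' : V} {Q : G.Walk b a}
    (hQ : Q.IsPath) {C : G.Walk s s} (hC : C.IsCycle) (hvv' : v ≠ v')
    (hvQ : v ∈ Q.support) (hvC : v ∈ C.support) (hv'Q : v' ∈ Q.support) (hv'C : v' ∈ C.support)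
    {g : Sym2 V} (hg : g ∈ C.edges) :
    ∃ P : G.Walk b a, P.IsPath ∧ g ∈ P.edges ∧ ∀ e ∈ P.edges, e ∈ Q.edges ∨ e ∈ C.edges := by
  -- `P` follows `Q` to its first vertex `y` on `C`, then the arc of `C` through `g` to the last
  -- vertex `x` of `Q` on `C`, then `Q` again
  obtain ⟨y, Q₁, Q₂, rfl, hyC, hQ₁⟩ :=
    Q.exists_append_first_mem {z | z ∈ C.support} ⟨v, hvQ, hvC⟩
  obtain ⟨x, R₁, R₂, hR, hxC, hR₁⟩ :=
    Q₂.reverse.exists_append_first_mem {z | z ∈ C.support} ⟨y, by simp, hyC⟩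
  obtain rfl : Q₂ = R₂.reverse.append R₁.reverse := by
    rw [← reverse_append, ← hR, reverse_reverse]
  clear hR
  have hR₁p : R₁.IsPath := (isPath_reverse_iff _).mp hQ.of_append_right.of_append_right
  have hxy : x ≠ y := by
    -- otherwise `Q` would meet `C` in `x` only
    rintro rfl
    have hR₂ : R₂.Nil :=
      isPath_iff_nil.mp ((isPath_reverse_iff _).mp hQ.of_append_right.of_append_left)
    have hQC : ∀ z ∈ (Q₁.append (R₂.reverse.append R₁.reverse)).support, z ∈ C.support →
        z = x := by
      intro z hz hzC
      simp only [mem_support_append_iff, support_reverse, List.mem_reverse] at hz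
      rcases hz with hz | hz | hz
      · exact hQ₁ z hz hzC
      · simpa [hR₂.eq_nil] using hz
      · exact hR₁ z hz hzC
    exact hvv' ((hQC v hvQ hvC).trans (hQC v' hv'Q hv'C).symm)
  obtain ⟨A, hA, hgA, hAC, hACe⟩ := hC.exists_isPath_mem_edges_s7 hxC hyC hxy hg
  refine ⟨Q₁.append (A.append R₁.reverse), ?_, by simp [hgA], fun e he => ?_⟩
  · refine hQ.of_append_left.append_of_forall_mem_support
      (hA.append_of_forall_mem_support hR₁p.reverse fun z hzA hzR => ?_) fun z hzQ hz => ?_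
    · rw [support_reverse, List.mem_reverse] at hzR
      exact hR₁ z hzR (hAC hzA)
    · rcases (mem_support_append_iff _ _).mp hz with hzA | hzR
      · exact hQ₁ z hzQ (hAC hzA)
      · by_contra hzy
        refine hQ.ne_of_mem_support_of_append hzy hzQ ?_ rfl
        exact (mem_support_append_iff _ _).mpr (Or.inr hzR)
  · simp only [edges_append, edges_reverse, List.mem_append, List.mem_reverse] at he ⊢
    rcases he with he | he | he
    · exact Or.inl (Or.inl he)
    · exact Or.inr (hACe he)
    · exact Or.inl (Or.inr (Or.inr he))

lemma IsCycle.exists_walk_notMem_support {s u w z : V} {C : G.Walk s s} (hC : C.IsCycle)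
    (hu : u ∈ C.support) (hw : w ∈ C.support) (hzu : z ≠ u) (hzw : z ≠ w) :
    ∃ W : G.Walk u w, z ∉ W.support := by
  classical
  suffices h : ∃ (t t' : V) (T : G.Walk t t') (huT : u ∈ T.support) (hwT : w ∈ T.support),
      z ∉ (T.takeUntil u huT).support ∧ z ∉ (T.takeUntil w hwT).support by
    obtain ⟨t, t', T, huT, hwT, hzu', hzw'⟩ := h
    refine ⟨(T.takeUntil u huT).reverse.append (T.takeUntil w hwT), fun hz => ?_⟩
    rw [mem_support_append_iff, support_reverse, List.mem_reverse] at hz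
    exact hz.elim hzu' hzw'
  by_cases hzC : z ∈ C.support
  · -- removing `z` from the cycle leaves a path ending at `z`
    set D := C.rotate z hzC
    have hD : D.IsCycle := hC.rotate hzC
    have hmem : ∀ {x}, x ∈ C.support → x ≠ z → x ∈ D.tail.support := by
      intro x hx hxz
      have := (C.mem_support_rotate_iff z hzC).mpr hx
      rw [← D.cons_support_tail hD.not_nil, List.mem_cons] at this
      exact this.resolve_left hxz
    exact ⟨_, _, D.tail, hmem hu hzu.symm, hmem hw hzw.symm,
      endpoint_notMem_support_takeUntil hD.isPath_tail _ hzu,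
      endpoint_notMem_support_takeUntil hD.isPath_tail _ hzw⟩
  · exact ⟨s, s, C, hu, hw, fun h => hzC (C.support_takeUntil_subset_support hu h),
      fun h => hzC (C.support_takeUntil_subset_support hw h)⟩

end Walk

lemma OnCommonCycle.symm {e f : Sym2 V} (h : G.OnCommonCycle e f) : G.OnCommonCycle f e :=
  let ⟨x, c, hc, he, hf⟩ := h
  ⟨x, c, hc, hf, he⟩

open Walk in
lemma OnCommonCycle.trans {e f g : Sym2 V} (hef : G.OnCommonCycle e f)
    (hfg : G.OnCommonCycle f g) : G.OnCommonCycle e g := by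
  classical
  obtain ⟨s₁, C₁, hC₁, he₁, hf₁⟩ := hef
  obtain ⟨s₂, C₂, hC₂, hf₂, hg₂⟩ := hfg
  by_cases he₂ : e ∈ C₂.edges
  · exact ⟨s₂, C₂, hC₂, he₂, hg₂⟩
  obtain ⟨a, b⟩ := e
  obtain ⟨v, v'⟩ := f
  have ha : a ∈ C₁.support := C₁.fst_mem_support_of_mem_edges he₁
  obtain ⟨Q, hQ, heQ, hC₁Q⟩ :=
    (hC₁.rotate ha).exists_isPath_of_mem_edges ((C₁.rotate_edges a ha).mem_iff.mpr he₁)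
  have hsupp : ∀ {z}, z ∈ C₁.support → z ∈ Q.support :=
    fun hz => hC₁Q ((C₁.mem_support_rotate_iff a ha).mpr hz)
  obtain ⟨P, hP, hgP, hPe⟩ := hQ.exists_isPath_mem_edges_of_isCycle hC₂
    (C₁.adj_of_mem_edges hf₁).ne (hsupp (C₁.fst_mem_support_of_mem_edges hf₁))
    (C₂.fst_mem_support_of_mem_edges hf₂) (hsupp (C₁.snd_mem_support_of_mem_edges hf₁))
    (C₂.snd_mem_support_of_mem_edges hf₂) hg₂
  have hab : G.Adj a b := C₁.adj_of_mem_edges he₁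
  refine ⟨a, cons hab P, (cons_isCycle_iff P hab).mpr ⟨hP, fun he => ?_⟩, by simp, by simp [hgP]⟩
  exact (hPe _ he).elim heQ he₂

end SimpleGraph

section Ancestor

variable {V : Type} {p : V → V}

lemma isAncestor_refl (v : V) : IsAncestor p v v := ⟨0, rfl⟩

lemma isAncestor_apply (v : V) : IsAncestor p (p v) v := ⟨1, rfl⟩

lemma IsAncestor.trans {a b c : V} (hab : IsAncestor p a b) (hbc : IsAncestor p b c) :
    IsAncestor p a c := by
  obtain ⟨i, rfl⟩ := hab
  obtain ⟨j, rfl⟩ := hbc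
  exact ⟨i + j, iterate_add_apply p i j c⟩

lemma IsAncestor.total {a b v : V} (ha : IsAncestor p a v) (hb : IsAncestor p b v) :
    IsAncestor p a b ∨ IsAncestor p b a := by
  obtain ⟨i, rfl⟩ := ha
  obtain ⟨j, rfl⟩ := hb
  rcases le_total i j with h | h
  · exact Or.inr ⟨j - i, by rw [← iterate_add_apply, Nat.sub_add_cancel h]⟩
  · exact Or.inl ⟨i - j, by rw [← iterate_add_apply, Nat.sub_add_cancel h]⟩

lemma IsAncestor.apply_of_ne {z v : V} (h : IsAncestor p z v) (hne : z ≠ v) :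
    IsAncestor p z (p v) := by
  obtain ⟨_ | i, rfl⟩ := h
  · exact absurd rfl hne
  · exact ⟨i, (iterate_succ_apply p i v).symm⟩

end Ancestor

structure IsParentPointers {V : Type} (p : V → V) (r : V) : Prop where
  exists_iterate_fixed : ∀ v, ∃ i : ℕ, p^[i + 1] v = p^[i] v
  map_root : p r = r
  eq_root_of_fixed : ∀ v, p v = v → v = r

namespace IsParentPointers

variable {V : Type} {p : V → V} {r : V} (hT : IsParentPointers p r)
include hT

lemma apply_ne {v : V} (hv : v ≠ r) : p v ≠ v := fun h => hv (hT.eq_root_of_fixed v h)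

lemma isAncestor_root (v : V) : IsAncestor p r v := by
  obtain ⟨i, hi⟩ := hT.exists_iterate_fixed v
  exact ⟨i, hT.eq_root_of_fixed _ (by rwa [← iterate_succ_apply' p i v])⟩

lemma eq_root_of_iterate_eq {x : V} {m : ℕ} (hm : 0 < m) (h : p^[m] x = x) : x = r := by
  obtain ⟨i, hi⟩ := hT.isAncestor_root x
  have hper : p^[m * i] x = x := (show IsPeriodicPt p m x from h).mul_const i
  calc x = p^[m * i - i] (p^[i] x) := by
        rw [← iterate_add_apply, Nat.sub_add_cancel (Nat.le_mul_of_pos_left i hm), hper]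
    _ = r := by rw [hi, iterate_fixed hT.map_root]

lemma not_isAncestor_apply {v : V} (hv : v ≠ r) : ¬ IsAncestor p v (p v) := by
  rintro ⟨j, hj⟩
  exact hv (hT.eq_root_of_iterate_eq j.succ_pos (by rwa [iterate_succ_apply]))

lemma isAncestor_antisymm {a b : V} (hab : IsAncestor p a b) (hba : IsAncestor p b a) :
    a = b := by
  obtain ⟨i, rfl⟩ := hab
  obtain ⟨j, hj⟩ := hba
  rcases Nat.eq_zero_or_pos (j + i) with h | h
  · obtain ⟨rfl, rfl⟩ : j = 0 ∧ i = 0 := by omega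
    rfl
  · obtain rfl := hT.eq_root_of_iterate_eq h (by rwa [iterate_add_apply])
    exact iterate_fixed hT.map_root i

lemma eq_of_apply_eq {x y z v : V} (hx : p x = z) (hy : p y = z) (hxz : x ≠ z) (hyz : y ≠ z)
    (hxv : IsAncestor p x v) (hyv : IsAncestor p y v) : x = y := by
  have key : ∀ {a b}, p a = z → a ≠ z → p b = z → IsAncestor p a b → a = b := by
    intro a b ha haz hb hab
    by_contra hne
    exact haz (hT.isAncestor_antisymm (hb ▸ hab.apply_of_ne hne) (ha ▸ isAncestor_apply a))
  rcases hxv.total hyv with h | h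
  · exact key hx hxz hy h
  · exact (key hy hyz hx h).symm

lemma exists_maximal_isAncestor_not_isAncestor {u w : V} (h : ¬ IsAncestor p u w) :
    ∃ c, IsAncestor p c u ∧ ¬ IsAncestor p c w ∧ IsAncestor p (p c) w := by
  classical
  have hex : ∃ i, IsAncestor p (p^[i] u) w := by
    obtain ⟨i, hi⟩ := hT.isAncestor_root u
    exact ⟨i, hi ▸ hT.isAncestor_root w⟩
  obtain ⟨j, hj⟩ : ∃ j, Nat.find hex = j + 1 :=
    Nat.exists_eq_succ_of_ne_zero fun h0 => h (by simpa [h0] using Nat.find_spec hex)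
  refine ⟨p^[j] u, ⟨j, rfl⟩, Nat.find_min hex (by omega), ?_⟩
  rw [← iterate_succ_apply' p j u]
  simpa only [hj] using Nat.find_spec hex

lemma exists_child_isAncestor {z v : V} (h : IsAncestor p z v) (hne : z ≠ v) :
    ∃ c, p c = z ∧ c ≠ z ∧ IsAncestor p c v := by
  obtain ⟨c, hcv, hcz, hpc⟩ := hT.exists_maximal_isAncestor_not_isAncestor
    fun h' => hne (hT.isAncestor_antisymm h h')
  have hzc : c ≠ z := by rintro rfl; exact hcz (isAncestor_refl c)
  have hzc' : IsAncestor p z c := (h.total hcv).resolve_right hcz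
  exact ⟨c, hT.isAncestor_antisymm hpc (hzc'.apply_of_ne hzc.symm), hzc, hcv⟩

lemma dep_apply_lt {v : V} (hv : v ≠ r) : dep p (p v) < dep p v := by
  have hmem : dep p v ∈ {i : ℕ | p^[i + 1] v = p^[i] v} :=
    Nat.sInf_mem (hT.exists_iterate_fixed v)
  obtain ⟨d, hd⟩ : ∃ d, dep p v = d + 1 :=
    Nat.exists_eq_succ_of_ne_zero fun h0 => hT.apply_ne hv (by simpa [h0] using hmem)
  rw [hd] at hmem ⊢
  refine Nat.lt_succ_of_le (Nat.sInf_le ?_)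
  rw [Set.mem_ofPred_eq, ← iterate_succ_apply, ← iterate_succ_apply]
  exact hmem

end IsParentPointers

open Classical in
noncomputable def childToward {V : Type} (p : V → V) (z v : V) : V :=
  if h : ∃ c, p c = z ∧ c ≠ z ∧ IsAncestor p c v then h.choose else z

lemma childToward_of_not_isAncestor {V : Type} {p : V → V} {z v : V}
    (h : ¬ IsAncestor p z v) : childToward p z v = z := by
  rw [childToward, dif_neg]
  rintro ⟨c, rfl, -, hcv⟩
  exact h ((isAncestor_apply c).trans hcv)

lemma auxGraph_adj_of_not_isAncestor {V : Type} {G : SimpleGraph V} {p : V → V} {r : V}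
    {a b : V} (hadj : G.Adj a b) (hab : ¬ IsAncestor p a b) (hba : ¬ IsAncestor p b a) :
    (auxGraph G p r).Adj a b := by
  rw [auxGraph, SimpleGraph.fromRel_adj]
  exact ⟨hadj.ne, Or.inl (Or.inr ⟨hadj, fun h => hba (h ▸ isAncestor_apply a),
    fun h => hab (h ▸ isAncestor_apply b), hab, hba⟩)⟩

namespace IsParentPointers

open SimpleGraph

variable {V : Type} {G : SimpleGraph V} {p : V → V} {r : V} (hT : IsParentPointers p r)
include hT

lemma childToward_eq {z v c : V} (hc : p c = z) (hcz : c ≠ z) (hcv : IsAncestor p c v) :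
    childToward p z v = c := by
  have h : ∃ c, p c = z ∧ c ≠ z ∧ IsAncestor p c v := ⟨c, hc, hcz, hcv⟩
  rw [childToward, dif_pos h]
  obtain ⟨h₁, h₂, h₃⟩ := h.choose_spec
  exact hT.eq_of_apply_eq h₁ hc h₂ hcz h₃ hcv

lemma auxGraph_adj_apply {v x y : V} (hv : v ≠ r) (hxy : G.Adj x y) (hvx : IsAncestor p v x)
    (hy : ¬ IsAncestor p (p v) y) : (auxGraph G p r).Adj v (p v) := by
  rw [auxGraph, fromRel_adj]
  exact ⟨(hT.apply_ne hv).symm, Or.inl (Or.inl ⟨hv, rfl, x, y, hxy, hvx, hy⟩)⟩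

lemma reachable_of_adj_of_isAncestor {x y c : V} (hxy : G.Adj x y) (hcx : IsAncestor p c x)
    (hcy : ¬ IsAncestor p c y) : (auxGraph G p r).Reachable x c := by
  obtain ⟨i, rfl⟩ := hcx
  induction i with
  | zero => rfl
  | succ i ih =>
    rw [iterate_succ_apply'] at hcy ⊢
    have hr : p^[i] x ≠ r := fun h => hcy (by rw [h, hT.map_root]; exact hT.isAncestor_root y)
    exact (ih fun h => hcy ((isAncestor_apply _).trans h)).trans
      (hT.auxGraph_adj_apply hr hxy ⟨i, rfl⟩ hcy).reachable

lemma reachable_childToward_of_adj {a b z : V} (hab : G.Adj a b) (haz : a ≠ z) (hbz : b ≠ z) :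
    (auxGraph G p r).Reachable (childToward p z a) (childToward p z b) := by
  have below_above : ∀ {a b}, G.Adj a b → a ≠ z → IsAncestor p z a → ¬ IsAncestor p z b →
      (auxGraph G p r).Reachable (childToward p z a) z := by
    intro a b hab haz hza hzb
    obtain ⟨c, hc, hcz, hca⟩ := hT.exists_child_isAncestor hza haz.symm
    rw [hT.childToward_eq hc hcz hca]
    have hcb : ¬ IsAncestor p c b := fun h => hzb (hc ▸ (isAncestor_apply c).trans h)
    exact (hT.reachable_of_adj_of_isAncestor hab hca hcb).symm.trans
      (hT.reachable_of_adj_of_isAncestor hab hza hzb)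
  by_cases hza : IsAncestor p z a <;> by_cases hzb : IsAncestor p z b
  · obtain ⟨c, hc, hcz, hca⟩ := hT.exists_child_isAncestor hza haz.symm
    obtain ⟨d, hd, hdz, hdb⟩ := hT.exists_child_isAncestor hzb hbz.symm
    rw [hT.childToward_eq hc hcz hca, hT.childToward_eq hd hdz hdb]
    by_cases hcd : c = d
    · rw [hcd]
    have hcb : ¬ IsAncestor p c b := fun h => hcd (hT.eq_of_apply_eq hc hd hcz hdz h hdb)
    have hda : ¬ IsAncestor p d a := fun h => hcd (hT.eq_of_apply_eq hc hd hcz hdz hca h)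
    -- `a` and `b` lie below different children of `z`, so `ab` is a cross edge
    have hcross : (auxGraph G p r).Adj a b := auxGraph_adj_of_not_isAncestor hab
      (fun h => hcb (hca.trans h)) (fun h => hda (hdb.trans h))
    exact (hT.reachable_of_adj_of_isAncestor hab hca hcb).symm.trans
      (hcross.reachable.trans (hT.reachable_of_adj_of_isAncestor hab.symm hdb hda))
  · rw [childToward_of_not_isAncestor hzb]
    exact below_above hab haz hza hzb
  · rw [childToward_of_not_isAncestor hza]
    exact (below_above hab.symm hbz hzb hza).symm
  · rw [childToward_of_not_isAncestor hza, childToward_of_not_isAncestor hzb]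

lemma reachable_childToward_of_walk {a b z : V} (W : G.Walk a b) (hz : z ∉ W.support) :
    (auxGraph G p r).Reachable (childToward p z a) (childToward p z b) := by
  induction W with
  | nil => rfl
  | cons h W ih =>
    rw [Walk.support_cons, List.mem_cons, not_or] at hz
    exact (hT.reachable_childToward_of_adj h (Ne.symm hz.1)
      fun e => hz.2 (e ▸ W.start_mem_support)).trans (ih hz.2)

lemma reachable_of_isAncestor_of_forall_exists_walk {u m c : V}
    (hlink : ∀ z, z ≠ u → z ≠ m → ∃ W : G.Walk u m, z ∉ W.support)
    (hcu : IsAncestor p c u) (hcm : ¬ IsAncestor p c m) : (auxGraph G p r).Reachable u c := by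
  obtain ⟨i, rfl⟩ := hcu
  induction i with
  | zero => rfl
  | succ i ih =>
    have hc : p (p^[i] u) = p^[i + 1] u := (iterate_succ_apply' p i u).symm
    refine (ih fun h => hcm (hc ▸ (isAncestor_apply _).trans h)).trans ?_
    by_cases hcc : p^[i] u = p^[i + 1] u
    · rw [hcc]
    have hu : p^[i + 1] u ≠ u := fun h => hcm <| by
      rw [h, hT.eq_root_of_iterate_eq i.succ_pos h]
      exact hT.isAncestor_root m
    obtain ⟨W, hW⟩ := hlink _ hu fun h => hcm (h ▸ isAncestor_refl _)
    have := hT.reachable_childToward_of_walk W hW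
    rwa [hT.childToward_eq hc hcc ⟨i, rfl⟩, childToward_of_not_isAncestor hcm] at this

lemma reachable_of_onCommonCycle {u w : V} (h : G.OnCommonCycle s(u, p u) s(w, p w)) :
    (auxGraph G p r).Reachable u w := by
  obtain ⟨s, C, hC, hu, hw⟩ := h
  have hlink : ∀ {a b}, a ∈ C.support → b ∈ C.support →
      ∀ z, z ≠ a → z ≠ b → ∃ W : G.Walk a b, z ∉ W.support :=
    fun ha hb _ hza hzb => hC.exists_walk_notMem_support ha hb hza hzb
  have hne : ∀ {v}, s(v, p v) ∈ C.edges → v ≠ r := fun hv h =>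
    (C.adj_of_mem_edges hv).ne (by rw [h, hT.map_root])
  have hus := C.fst_mem_support_of_mem_edges hu
  have hws := C.fst_mem_support_of_mem_edges hw
  by_cases huw : IsAncestor p u w
  · exact (hT.reachable_of_isAncestor_of_forall_exists_walk
      (hlink hws (C.snd_mem_support_of_mem_edges hu)) huw (hT.not_isAncestor_apply (hne hu))).symm
  by_cases hwu : IsAncestor p w u
  · exact hT.reachable_of_isAncestor_of_forall_exists_walk
      (hlink hus (C.snd_mem_support_of_mem_edges hw)) hwu (hT.not_isAncestor_apply (hne hw))
  -- `c` and `d` are the children of the lowest common ancestor `p c` towards `u` and `w`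
  obtain ⟨c, hcu, hcw, hpcw⟩ := hT.exists_maximal_isAncestor_not_isAncestor huw
  have hwpc : w ≠ p c := fun h => hwu (h ▸ (isAncestor_apply c).trans hcu)
  obtain ⟨d, hd, hdc, hdw⟩ := hT.exists_child_isAncestor hpcw hwpc.symm
  have hcpc : c ≠ p c := fun h => hcw (h ▸ hpcw)
  have hdu : ¬ IsAncestor p d u := fun h => hcw (hT.eq_of_apply_eq rfl hd hcpc hdc hcu h ▸ hdw)
  obtain ⟨W, hW⟩ := hlink hus hws (p c) (fun h => huw (h ▸ hpcw)) hwpc.symm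
  have hcd := hT.reachable_childToward_of_walk W hW
  rw [hT.childToward_eq rfl hcpc hcu, hT.childToward_eq hd hdc hdw] at hcd
  exact (hT.reachable_of_isAncestor_of_forall_exists_walk (hlink hus hws) hcu hcw).trans
    (hcd.trans (hT.reachable_of_isAncestor_of_forall_exists_walk (hlink hws hus) hdw hdu).symm)

end IsParentPointers

namespace SimpleGraph.Walk

variable {V : Type} {G : SimpleGraph V}

structure IsTreePath (p : V → V) {x y : V} (Q : G.Walk x y) : Prop where
  isPath : Q.IsPath
  isAncestor_of_mem_support : ∀ z ∈ Q.support, IsAncestor p z x ∨ IsAncestor p z y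
  exists_eq_of_mem_edges : ∀ e ∈ Q.edges, ∃ c, e = s(c, p c)
  mem_edges : ∀ c, Xor (IsAncestor p c x) (IsAncestor p c y) → s(c, p c) ∈ Q.edges

variable {p : V → V}

lemma isTreePath_nil (x : V) : (nil : G.Walk x x).IsTreePath p where
  isPath := .nil
  isAncestor_of_mem_support := by simp [isAncestor_refl]
  exists_eq_of_mem_edges := by simp
  mem_edges c hc := by simp at hc

lemma IsTreePath.reverse {x y : V} {Q : G.Walk x y} (hQ : Q.IsTreePath p) :
    Q.reverse.IsTreePath p where
  isPath := hQ.isPath.reverse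
  isAncestor_of_mem_support z hz := by
    rw [support_reverse, List.mem_reverse] at hz
    exact (hQ.isAncestor_of_mem_support z hz).symm
  exists_eq_of_mem_edges e he := by
    rw [edges_reverse, List.mem_reverse] at he
    exact hQ.exists_eq_of_mem_edges e he
  mem_edges c hc := by
    rw [edges_reverse, List.mem_reverse]
    exact hQ.mem_edges c (by rwa [xor_comm] at hc)

lemma IsTreePath.cons {r x y : V} (hT : IsParentPointers p r) {Q : G.Walk (p x) y}
    (hQ : Q.IsTreePath p) (h : G.Adj x (p x)) (hxy : ¬ IsAncestor p x y) :
    (cons h Q).IsTreePath p where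
  isPath := by
    refine hQ.isPath.cons fun hx => ?_
    rcases hQ.isAncestor_of_mem_support x hx with hx | hx
    · exact hT.not_isAncestor_apply (fun e => hxy (by rw [e]; exact hT.isAncestor_root y)) hx
    · exact hxy hx
  isAncestor_of_mem_support z hz := by
    rw [support_cons, List.mem_cons] at hz
    rcases hz with rfl | hz
    · exact Or.inl (isAncestor_refl z)
    · exact (hQ.isAncestor_of_mem_support z hz).imp_left fun h => h.trans (isAncestor_apply x)
  exists_eq_of_mem_edges e he := by
    rw [edges_cons, List.mem_cons] at he
    rcases he with rfl | he
    · exact ⟨x, rfl⟩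
    · exact hQ.exists_eq_of_mem_edges e he
  mem_edges c hc := by
    rw [edges_cons, List.mem_cons]
    rcases hc with ⟨hcx, hcy⟩ | ⟨hcy, hcx⟩
    · by_cases hc : c = x
      · exact Or.inl (hc ▸ rfl)
      · exact Or.inr (hQ.mem_edges c (Or.inl ⟨hcx.apply_of_ne hc, hcy⟩))
    · exact Or.inr (hQ.mem_edges c (Or.inr ⟨hcy, fun h => hcx (h.trans (isAncestor_apply x))⟩))

end SimpleGraph.Walk

namespace IsParentPointers

open SimpleGraph Walk

variable {V : Type} {G : SimpleGraph V} {p : V → V} {r : V} (hT : IsParentPointers p r)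
  (hspan : ∀ v : V, v ≠ r → G.Adj v (p v))
include hT hspan

lemma exists_isTreePath (x y : V) : ∃ Q : G.Walk x y, Q.IsTreePath p := by
  induction hn : dep p x + dep p y using Nat.strong_induction_on generalizing x y with
  | _ n ih =>
    by_cases hxy : IsAncestor p x y
    · by_cases hyx : IsAncestor p y x
      · obtain rfl := hT.isAncestor_antisymm hxy hyx
        exact ⟨nil, isTreePath_nil x⟩
      have hy : y ≠ r := fun h => hyx (h ▸ hT.isAncestor_root x)
      obtain ⟨Q, hQ⟩ := ih _ (by have := hT.dep_apply_lt hy; omega) (p y) x rfl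
      exact ⟨(cons (hspan y hy) Q).reverse, (hQ.cons hT _ hyx).reverse⟩
    · have hx : x ≠ r := fun h => hxy (h ▸ hT.isAncestor_root y)
      obtain ⟨Q, hQ⟩ := ih _ (by have := hT.dep_apply_lt hx; omega) (p x) y rfl
      exact ⟨cons (hspan x hx) Q, hQ.cons hT _ hxy⟩

lemma exists_isCycle_of_adj {x y : V} (hxy : G.Adj x y) (hpx : p x ≠ y) (hpy : p y ≠ x) :
    ∃ C : G.Walk y y, C.IsCycle ∧
      ∀ c, Xor (IsAncestor p c x) (IsAncestor p c y) → s(c, p c) ∈ C.edges := by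
  obtain ⟨Q, hQ⟩ := hT.exists_isTreePath hspan x y
  refine ⟨cons hxy.symm Q, (cons_isCycle_iff Q hxy.symm).mpr ⟨hQ.isPath, fun h => ?_⟩,
    fun c hc => by simp [hQ.mem_edges c hc]⟩
  obtain ⟨c, hc⟩ := hQ.exists_eq_of_mem_edges _ h
  rcases Sym2.eq_iff.mp hc with ⟨rfl, rfl⟩ | ⟨rfl, rfl⟩
  exacts [hpy rfl, hpx rfl]

lemma onCommonCycle_of_isAncestor {a x y : V} (hxy : G.Adj x y) (hax : IsAncestor p a x)
    (hy : ¬ IsAncestor p (p a) y) : G.OnCommonCycle s(a, p a) s(p a, p (p a)) := by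
  have hay : ¬ IsAncestor p a y := fun h => hy ((isAncestor_apply a).trans h)
  have hpx : p x ≠ y := by
    rintro rfl
    by_cases hxa : a = x
    · exact hy (hxa ▸ isAncestor_refl _)
    · exact hay (hax.apply_of_ne hxa)
  have hpy : p y ≠ x := fun h =>
    hy ((isAncestor_apply a).trans (hax.trans (h ▸ isAncestor_apply y)))
  obtain ⟨C, hC, hCe⟩ := hT.exists_isCycle_of_adj hspan hxy hpx hpy
  exact ⟨y, C, hC, hCe a (Or.inl ⟨hax, hay⟩),
    hCe (p a) (Or.inl ⟨(isAncestor_apply a).trans hax, hy⟩)⟩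

lemma onCommonCycle_of_not_isAncestor {a b : V} (hadj : G.Adj a b) (hab : ¬ IsAncestor p a b)
    (hba : ¬ IsAncestor p b a) : G.OnCommonCycle s(a, p a) s(b, p b) := by
  obtain ⟨C, hC, hCe⟩ := hT.exists_isCycle_of_adj hspan hadj
    (fun h => hba (h ▸ isAncestor_apply a)) (fun h => hab (h ▸ isAncestor_apply b))
  exact ⟨b, C, hC, hCe a (Or.inl ⟨isAncestor_refl a, hab⟩),
    hCe b (Or.inr ⟨isAncestor_refl b, hba⟩)⟩

lemma onCommonCycle_of_auxGraph_adj {a b : V} (h : (auxGraph G p r).Adj a b) :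
    G.OnCommonCycle s(a, p a) s(b, p b) := by
  rw [auxGraph, fromRel_adj] at h
  obtain ⟨-, (⟨-, rfl, x, y, hxy, hax, hy⟩ | ⟨hadj, -, -, hab, hba⟩) |
    (⟨-, rfl, x, y, hxy, hbx, hy⟩ | ⟨hadj, -, -, hba, hab⟩)⟩ := h
  · exact hT.onCommonCycle_of_isAncestor hspan hxy hax hy
  · exact hT.onCommonCycle_of_not_isAncestor hspan hadj hab hba
  · exact (hT.onCommonCycle_of_isAncestor hspan hxy hbx hy).symm
  · exact (hT.onCommonCycle_of_not_isAncestor hspan hadj hba hab).symm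

lemma eq_or_onCommonCycle_of_reachable {u w : V} (h : (auxGraph G p r).Reachable u w) :
    u = w ∨ G.OnCommonCycle s(u, p u) s(w, p w) := by
  obtain ⟨W⟩ := h
  induction W with
  | nil => exact Or.inl rfl
  | cons hadj W ih =>
    have h₁ := hT.onCommonCycle_of_auxGraph_adj hspan hadj
    rcases ih with rfl | h₂
    exacts [Or.inr h₁, Or.inr (h₁.trans h₂)]

end IsParentPointers

theorem stmt7_general {V : Type}
    (G : SimpleGraph V) (p : V → V) (r : V)
    (hstab : ∀ v : V, ∃ i : ℕ, p^[i + 1] v = p^[i] v)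
    (hr : p r = r) (hroot : ∀ v : V, p v = v → v = r)
    (hspan : ∀ v : V, v ≠ r → G.Adj v (p v))
    (u w : V) :
    (auxGraph G p r).Reachable u w ↔
      (u = w ∨ ∃ (x : V) (c : G.Walk x x), c.IsCycle ∧
        s(u, p u) ∈ c.edges ∧ s(w, p w) ∈ c.edges) := by
  have hT : IsParentPointers p r := ⟨hstab, hr, hroot⟩
  refine ⟨hT.eq_or_onCommonCycle_of_reachable hspan, ?_⟩
  rintro (rfl | h)
  exacts [.rfl, hT.reachable_of_onCommonCycle h]

theorem stmt7 {V : Type} [Fintype V] [DecidableEq V]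
    (G : SimpleGraph V) (p : V → V) (r : V)
    (hG : G.Connected) (hcard : 2 ≤ Fintype.card V)
    (hstab : ∀ v : V, ∃ i : ℕ, p^[i + 1] v = p^[i] v)
    (hr : p r = r) (hroot : ∀ v : V, p v = v → v = r)
    (hspan : ∀ v : V, v ≠ r → G.Adj v (p v))
    (u w : V) (hu : u ≠ r) (hw : w ≠ r) :
    (auxGraph G p r).Reachable u w ↔
      (u = w ∨ ∃ (x : V) (c : G.Walk x x), c.IsCycle ∧
        s(u, p u) ∈ c.edges ∧ s(w, p w) ∈ c.edges) :=
  stmt7_general G p r hstab hr hroot hspan u w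
end

section
/- If u, w ∈ V lie in different connected components of G, then no simple cycle of the apex graph G* contains both u and w. -/
/-- The apex graph `G*` on `Option V` (`none` plays the role of the new vertex `v*`):
it has all edges of `G` together with an edge from every vertex of `V` to `v*`. -/
def apexGraph {V : Type} (G : SimpleGraph V) : SimpleGraph (Option V) :=
  SimpleGraph.fromRel (fun a b =>
    match a, b with
    | some x, some y => G.Adj x y
    | some _, none => True
    | none, _ => False)

namespace SimpleGraph

/-- In a cycle through `u` and `w`, the two arcs from `u` to `w` share only their endpoints,
so every other vertex can be avoided by one of them. -/
theorem Walk.IsCycle.exists_walk_notMem_support_s18 {α : Type*} {G : SimpleGraph α} {x : α}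
    {c : G.Walk x x} (hc : c.IsCycle) {u w z : α} (hu : u ∈ c.support) (hw : w ∈ c.support)
    (hzu : z ≠ u) (hzw : z ≠ w) : ∃ p : G.Walk u w, z ∉ p.support := by
  classical
  set c' := c.rotate u hu
  have hw' : w ∈ c'.support := (c.mem_support_rotate_iff u hu).2 hw
  set p := c'.takeUntil w hw'
  set q := c'.dropUntil w hw'
  have hdisjoint : (p.support.tail ++ q.support.tail).Nodup := by
    rw [← tail_support_append, c'.take_spec hw']
    exact (hc.rotate hu).support_nodup
  by_contra! havoid
  have hzp : z ∈ p.support.tail := ((mem_support_iff p).1 (havoid p)).resolve_left hzu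
  have hzq : z ∈ q.support.tail := by
    have hz : z ∈ q.support := by simpa using havoid q.reverse
    exact ((mem_support_iff q).1 hz).resolve_left hzw
  exact List.disjoint_of_nodup_append hdisjoint hzp hzq

end SimpleGraph

open SimpleGraph

section

variable {V : Type} (G : SimpleGraph V)

lemma apexGraph_adj_some {a b : V} : (apexGraph G).Adj (some a) (some b) ↔ G.Adj a b := by
  simp only [apexGraph, fromRel_adj, ne_eq, Option.some.injEq]
  exact ⟨fun ⟨_, h⟩ ↦ h.elim id fun h ↦ h.symm, fun h ↦ ⟨h.ne, .inl h⟩⟩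

lemma reachable_of_apexGraph_walk {x y : Option V} (p : (apexGraph G).Walk x y)
    (hp : none ∉ p.support) {a b : V} (ha : x = some a) (hb : y = some b) :
    G.Reachable a b := by
  induction p generalizing a with
  | nil => exact Option.some_injective _ (ha.symm.trans hb) ▸ .refl a
  | @cons _ y _ hxy q ih =>
    subst ha
    obtain ⟨c, rfl⟩ : ∃ c, y = some c :=
      Option.ne_none_iff_exists'.1 fun hy ↦ hp (by simp [← hy])
    have hq : none ∉ q.support := fun h ↦ hp (by simp [h])
    exact ((apexGraph_adj_some G).1 hxy).reachable.trans (ih hq rfl hb)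

end

theorem stmt18_general {V : Type}
    (G : SimpleGraph V) (u w : V) (h : ¬ G.Reachable u w) :
    ¬ ∃ (x : Option V) (c : (apexGraph G).Walk x x), c.IsCycle ∧
      (some u) ∈ c.support ∧ (some w) ∈ c.support := by
  rintro ⟨x, c, hc, hu, hw⟩
  obtain ⟨p, hp⟩ := hc.exists_walk_notMem_support_s18 hu hw (Option.some_ne_none u).symm
    (Option.some_ne_none w).symm
  exact h (reachable_of_apexGraph_walk G p hp rfl rfl)

theorem stmt18 {V : Type} [Fintype V] [DecidableEq V]
    (G : SimpleGraph V) (u w : V) (h : ¬ G.Reachable u w) :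
    ¬ ∃ (x : Option V) (c : (apexGraph G).Walk x x), c.IsCycle ∧
      (some u) ∈ c.support ∧ (some w) ∈ c.support :=
  stmt18_general G u w h
end
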